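/- Let i and j be adjacent vertices in a simple undirected graph. There exist i' ∈ N(i)\{j} and j' ∈ N(j)\{i} with i' ≠ j' if and only if either (deg(i) ≥ 2 and deg(j) ≥ 2 and not (deg(i) = 2 and deg(j) = 2)) or (deg(i) = deg(j) = 2 and i and j do not lie on a common triangle). -/
import Mathlib

private lemma exists_ne_of_two_le {V : Type*} [DecidableEq V] {s : Finset V} {a : V}
    (ha : a ∈ s) (h : 2 ≤ s.card) : ∃ b ∈ s, b ≠ a := by
  have : 0 < (s.erase a).card := by
    have := Finset.card_erase_of_mem ha
    omega
  obtain ⟨b, hb⟩ := Finset.card_pos.mp this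
  exact ⟨b, Finset.mem_of_mem_erase hb, Finset.ne_of_mem_erase hb⟩

private lemma exists_ne_of_three_le {V : Type*} [DecidableEq V] {s : Finset V} {a : V} (b : V)
    (ha : a ∈ s) (h : 3 ≤ s.card) : ∃ c ∈ s, c ≠ a ∧ c ≠ b := by
  have h1 : 0 < ((s.erase a).erase b).card := by
    have h2 := Finset.card_erase_of_mem ha
    have h3 := Finset.card_erase_le (s := s.erase a) (a := b)
    have h4 : (s.erase a).card - 1 ≤ ((s.erase a).erase b).card :=
      Finset.pred_card_le_card_erase
    omega
  obtain ⟨c, hc⟩ := Finset.card_pos.mp h1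
  have hc' := Finset.mem_of_mem_erase hc
  exact ⟨c, Finset.mem_of_mem_erase hc', Finset.ne_of_mem_erase hc',
    Finset.ne_of_mem_erase hc⟩

private lemma card_two_mem {V : Type*} [DecidableEq V] {s : Finset V} {a b c : V}
    (ha : a ∈ s) (hb : b ∈ s) (hc : c ∈ s) (hab : a ≠ b) (h : s.card = 2) :
    c = a ∨ c = b := by
  by_contra hcon
  push_neg at hcon
  have hsub : ({c, a, b} : Finset V) ⊆ s := by
    intro x hx
    simp only [Finset.mem_insert, Finset.mem_singleton] at hx
    rcases hx with rfl | rfl | rfl <;> assumption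
  have : ({c, a, b} : Finset V).card = 3 := by
    rw [Finset.card_insert_of_notMem (by simp [hcon.1, hcon.2]),
      Finset.card_insert_of_notMem (by simp [hab]), Finset.card_singleton]
  have := Finset.card_le_card hsub
  omega

theorem stmt_3 {V : Type*} [Fintype V] (G : SimpleGraph V) [DecidableRel G.Adj]
    (i j : V) (hij : G.Adj i j) :
    (∃ i' j', G.Adj i i' ∧ i' ≠ j ∧ G.Adj j j' ∧ j' ≠ i ∧ i' ≠ j') ↔
      ((2 ≤ G.degree i ∧ 2 ≤ G.degree j ∧ ¬ (G.degree i = 2 ∧ G.degree j = 2)) ∨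
       (G.degree i = 2 ∧ G.degree j = 2 ∧ ¬ ∃ w, G.Adj i w ∧ G.Adj j w)) := by
  classical
  have hji : G.Adj j i := hij.symm
  constructor
  · rintro ⟨i', j', hii', hi'j, hjj', hj'i, hne⟩
    have hdi : 2 ≤ G.degree i := by
      rw [← SimpleGraph.card_neighborFinset_eq_degree]
      have h1 : j ∈ G.neighborFinset i := by rwa [SimpleGraph.mem_neighborFinset]
      have h2 : i' ∈ G.neighborFinset i := by rwa [SimpleGraph.mem_neighborFinset]
      calc 2 = ({i', j} : Finset V).card := by
              rw [Finset.card_insert_of_notMem (by simp [hi'j]), Finset.card_singleton]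
        _ ≤ _ := Finset.card_le_card (by
              intro x hx
              simp only [Finset.mem_insert, Finset.mem_singleton] at hx
              rcases hx with rfl | rfl <;> assumption)
    have hdj : 2 ≤ G.degree j := by
      rw [← SimpleGraph.card_neighborFinset_eq_degree]
      have h1 : i ∈ G.neighborFinset j := by rwa [SimpleGraph.mem_neighborFinset]
      have h2 : j' ∈ G.neighborFinset j := by rwa [SimpleGraph.mem_neighborFinset]
      calc 2 = ({j', i} : Finset V).card := by
              rw [Finset.card_insert_of_notMem (by simp [hj'i]), Finset.card_singleton]
        _ ≤ _ := Finset.card_le_card (by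
              intro x hx
              simp only [Finset.mem_insert, Finset.mem_singleton] at hx
              rcases hx with rfl | rfl <;> assumption)
    by_cases htwo : G.degree i = 2 ∧ G.degree j = 2
    · refine Or.inr ⟨htwo.1, htwo.2, ?_⟩
      rintro ⟨w, hwi, hwj⟩
      have hci : (G.neighborFinset i).card = 2 := by
        rw [SimpleGraph.card_neighborFinset_eq_degree]; exact htwo.1
      have hcj : (G.neighborFinset j).card = 2 := by
        rw [SimpleGraph.card_neighborFinset_eq_degree]; exact htwo.2
      have hwmi : w ∈ G.neighborFinset i := by rwa [SimpleGraph.mem_neighborFinset]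
      have hwmj : w ∈ G.neighborFinset j := by rwa [SimpleGraph.mem_neighborFinset]
      have h1 := card_two_mem (a := j) (b := i')
        (by rwa [SimpleGraph.mem_neighborFinset])
        (by rwa [SimpleGraph.mem_neighborFinset]) hwmi (Ne.symm hi'j) hci
      have h2 := card_two_mem (a := i) (b := j')
        (by rwa [SimpleGraph.mem_neighborFinset])
        (by rwa [SimpleGraph.mem_neighborFinset]) hwmj (Ne.symm hj'i) hcj
      have hwj' : w ≠ j := hwj.ne'
      have hwi' : w ≠ i := hwi.ne'
      rcases h1 with rfl | rfl
      · exact hwj' rfl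
      · rcases h2 with h2 | h2
        · exact hwi' h2
        · exact hne h2
    · exact Or.inl ⟨hdi, hdj, htwo⟩
  · rintro (⟨hdi, hdj, hnot⟩ | ⟨hdi, hdj, hno⟩)
    · have hci : 2 ≤ (G.neighborFinset i).card := by
        rw [SimpleGraph.card_neighborFinset_eq_degree]; exact hdi
      have hcj : 2 ≤ (G.neighborFinset j).card := by
        rw [SimpleGraph.card_neighborFinset_eq_degree]; exact hdj
      have hmj : j ∈ G.neighborFinset i := by rwa [SimpleGraph.mem_neighborFinset]
      have hmi : i ∈ G.neighborFinset j := by rwa [SimpleGraph.mem_neighborFinset]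
      rcases Nat.lt_or_ge (G.degree i) 3 with hi3 | hi3
      · -- then degree j ≥ 3
        have hj3 : 3 ≤ G.degree j := by omega
        have hj3' : 3 ≤ (G.neighborFinset j).card := by
          rw [SimpleGraph.card_neighborFinset_eq_degree]; exact hj3
        obtain ⟨i', hi'mem, hi'ne⟩ := exists_ne_of_two_le hmj hci
        obtain ⟨j', hj'mem, hj'i, hj'i'⟩ := exists_ne_of_three_le i' hmi hj3'
        exact ⟨i', j', (SimpleGraph.mem_neighborFinset ..).mp hi'mem, hi'ne,
          (SimpleGraph.mem_neighborFinset ..).mp hj'mem, hj'i, (Ne.symm hj'i')⟩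
      · have hi3' : 3 ≤ (G.neighborFinset i).card := by
          rw [SimpleGraph.card_neighborFinset_eq_degree]; exact hi3
        obtain ⟨j', hj'mem, hj'ne⟩ := exists_ne_of_two_le hmi hcj
        obtain ⟨i', hi'mem, hi'j, hi'j'⟩ := exists_ne_of_three_le j' hmj hi3'
        exact ⟨i', j', (SimpleGraph.mem_neighborFinset ..).mp hi'mem, hi'j,
          (SimpleGraph.mem_neighborFinset ..).mp hj'mem, hj'ne, hi'j'⟩
    · have hci : 2 ≤ (G.neighborFinset i).card := by
        rw [SimpleGraph.card_neighborFinset_eq_degree]; omega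
      have hcj : 2 ≤ (G.neighborFinset j).card := by
        rw [SimpleGraph.card_neighborFinset_eq_degree]; omega
      have hmj : j ∈ G.neighborFinset i := by rwa [SimpleGraph.mem_neighborFinset]
      have hmi : i ∈ G.neighborFinset j := by rwa [SimpleGraph.mem_neighborFinset]
      obtain ⟨i', hi'mem, hi'ne⟩ := exists_ne_of_two_le hmj hci
      obtain ⟨j', hj'mem, hj'ne⟩ := exists_ne_of_two_le hmi hcj
      refine ⟨i', j', (SimpleGraph.mem_neighborFinset ..).mp hi'mem, hi'ne,
        (SimpleGraph.mem_neighborFinset ..).mp hj'mem, hj'ne, ?_⟩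
      rintro rfl
      exact hno ⟨i', (SimpleGraph.mem_neighborFinset ..).mp hi'mem,
        (SimpleGraph.mem_neighborFinset ..).mp hj'mem⟩
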